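/- Let A be an m×n real matrix game with val(A) ≠ 0. Then A has a Shapley–Snow kernel that is a completely mixed game: there exist index sets I ⊆ {1,…,m}, J ⊆ {1,…,n} with |I| = |J| such that Ā = A[I,J] is invertible, val(Ā) = val(A) = (𝟏ᵀ Ā⁻¹ 𝟏)⁻¹, and every optimal strategy pair of the matrix game Ā has all components strictly positive. -/

import Mathlib

/-!
Among all submatrices `A[I,J]` with the same value as `A`, take one with `|I| + |J|` minimal.
If one of its optimal strategies vanished on some row (column), deleting that row (column) would
not change the value, so this minimal submatrix `B` is completely mixed.

Let `v ≠ 0` be the value of `B` and `(x, y)` an optimal pair, so `x > 0` and `y > 0`; by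
complementary slackness `B y = v 𝟏` and `xᵀ B = v 𝟏ᵀ`. If `B z = 0` with `z ≠ 0`, then
`v 𝟏ᵀ z = xᵀ B z = 0`, and moving `y` along `z` until a coordinate hits zero gives an optimal
strategy which is not strictly positive. Hence `B`, and likewise `Bᵀ`, has trivial kernel, so `B`
is square and invertible, and `1 = 𝟏ᵀ y = v 𝟏ᵀ B⁻¹ 𝟏`.

Optimal strategies exist by von Neumann's minimax theorem, a special case of Sion's.
-/

open Matrix

/-- The payoff `xᵀ A y` of the zero-sum matrix game `A` under mixed strategies `x`, `y`. -/
noncomputable def payoff {m n : ℕ} (A : Matrix (Fin m) (Fin n) ℝ)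
    (x : Fin m → ℝ) (y : Fin n → ℝ) : ℝ := x ⬝ᵥ A.mulVec y

/-- The value `val(A) = max_{x ∈ Δ_m} min_{y ∈ Δ_n} xᵀ A y` of the matrix game `A`. -/
noncomputable def matrixVal {m n : ℕ} (A : Matrix (Fin m) (Fin n) ℝ) : ℝ :=
  ⨆ x : stdSimplex ℝ (Fin m), ⨅ y : stdSimplex ℝ (Fin n), payoff A x.1 y.1

/-- `(x0, y0)` is an optimal (saddle-point) strategy pair for the matrix game `A`. -/
def IsOptimalPair {m n : ℕ} (A : Matrix (Fin m) (Fin n) ℝ)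
    (x0 : Fin m → ℝ) (y0 : Fin n → ℝ) : Prop :=
  x0 ∈ stdSimplex ℝ (Fin m) ∧ y0 ∈ stdSimplex ℝ (Fin n) ∧
    (∀ x ∈ stdSimplex ℝ (Fin m), payoff A x y0 ≤ payoff A x0 y0) ∧
    (∀ y ∈ stdSimplex ℝ (Fin n), payoff A x0 y0 ≤ payoff A x0 y)

open Function

section Simplex

variable {ι : Type*} [Fintype ι] {w f : ι → ℝ} {c : ℝ}

lemma le_dotProduct_of_mem_stdSimplex (hw : w ∈ stdSimplex ℝ ι) (h : ∀ i, c ≤ f i) :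
    c ≤ f ⬝ᵥ w :=
  calc c = ∑ i, c * w i := by rw [← Finset.mul_sum, hw.2, mul_one]
    _ ≤ f ⬝ᵥ w := Finset.sum_le_sum fun i _ => mul_le_mul_of_nonneg_right (h i) (hw.1 i)

lemma dotProduct_le_of_mem_stdSimplex (hw : w ∈ stdSimplex ℝ ι) (h : ∀ i, f i ≤ c) :
    f ⬝ᵥ w ≤ c :=
  calc f ⬝ᵥ w ≤ ∑ i, c * w i :=
      Finset.sum_le_sum fun i _ => mul_le_mul_of_nonneg_right (h i) (hw.1 i)
    _ = c := by rw [← Finset.mul_sum, hw.2, mul_one]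

lemma eq_of_forall_le_of_dotProduct_le (hw : w ∈ stdSimplex ℝ ι) (h : ∀ i, c ≤ f i)
    (hfw : f ⬝ᵥ w ≤ c) {i : ι} (hi : w i ≠ 0) : f i = c := by
  have hsum : ∑ j, (f j - c) * w j = f ⬝ᵥ w - c := by
    simp only [sub_mul, Finset.sum_sub_distrib, ← Finset.mul_sum, hw.2, mul_one, dotProduct]
  have hzero := (Finset.sum_eq_zero_iff_of_nonneg fun j _ =>
    mul_nonneg (sub_nonneg.2 (h j)) (hw.1 j)).1 (by linarith [le_dotProduct_of_mem_stdSimplex hw h])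
  exact sub_eq_zero.1 ((mul_eq_zero.1 (hzero i (Finset.mem_univ i))).resolve_right hi)

lemma eq_of_forall_ge_of_le_dotProduct (hw : w ∈ stdSimplex ℝ ι) (h : ∀ i, f i ≤ c)
    (hfw : c ≤ f ⬝ᵥ w) {i : ι} (hi : w i ≠ 0) : f i = c :=
  neg_injective <| eq_of_forall_le_of_dotProduct_le (f := -f) hw (fun j => neg_le_neg (h j))
    (by rw [neg_dotProduct]; exact neg_le_neg hfw) hi

lemma exists_add_smul_nonneg_and_eq_zero {y z : ι → ℝ} (hy : ∀ i, 0 ≤ y i)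
    (hz : ∃ i, z i < 0) : ∃ t : ℝ, (∀ i, 0 ≤ (y + t • z) i) ∧ ∃ i, (y + t • z) i = 0 := by
  classical
  obtain ⟨i₀, hi₀, hmin⟩ := (Finset.univ.filter fun i => z i < 0).exists_min_image
    (fun i => y i / -z i) (by simpa [Finset.filter_nonempty_iff] using hz)
  simp only [Finset.mem_filter, Finset.mem_univ, true_and] at hi₀ hmin
  refine ⟨y i₀ / -z i₀, fun i => ?_, i₀, ?_⟩
  · simp only [Pi.add_apply, Pi.smul_apply, smul_eq_mul]
    rcases lt_or_ge (z i) 0 with hzi | hzi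
    · have := (le_div_iff₀ (neg_pos.2 hzi)).1 (hmin i hzi)
      linarith
    · have := div_nonneg (hy i₀) (neg_nonneg.2 hi₀.le)
      nlinarith [hy i]
  · simp only [Pi.add_apply, Pi.smul_apply, smul_eq_mul]
    field_simp [hi₀.ne]
    ring

end Simplex

section Game

variable {m n : ℕ} {A : Matrix (Fin m) (Fin n) ℝ} {x x0 : Fin m → ℝ} {y y0 : Fin n → ℝ} {v : ℝ}

lemma payoff_eq_vecMul_dotProduct : payoff A x y = x ᵥ* A ⬝ᵥ y := dotProduct_mulVec _ _ _

lemma payoff_eq_mulVec_dotProduct : payoff A x y = A *ᵥ y ⬝ᵥ x := dotProduct_comm _ _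

lemma payoff_eq_toLinearMap₂' : payoff A x y = toLinearMap₂' ℝ A x y :=
  (toLinearMap₂'_apply' A x y).symm

lemma payoff_neg_transpose : payoff (-Aᵀ) y x = -payoff A x y := by
  rw [payoff, neg_mulVec, dotProduct_neg, mulVec_transpose, dotProduct_comm,
    payoff_eq_vecMul_dotProduct]

lemma matrixVal_eq_of_forall_le (hx0 : x0 ∈ stdSimplex ℝ (Fin m))
    (hy0 : y0 ∈ stdSimplex ℝ (Fin n)) (hx : ∀ j, v ≤ (x0 ᵥ* A) j) (hy : ∀ i, (A *ᵥ y0) i ≤ v) :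
    matrixVal A = v := by
  have : Nonempty (stdSimplex ℝ (Fin m)) := ⟨⟨x0, hx0⟩⟩
  have : Nonempty (stdSimplex ℝ (Fin n)) := ⟨⟨y0, hy0⟩⟩
  have hbdd (x : Fin m → ℝ) :
      BddBelow (Set.range fun y : stdSimplex ℝ (Fin n) => payoff A x y.1) := by
    rw [← Set.image_eq_range]
    exact (isCompact_stdSimplex ℝ _).bddBelow_image (by unfold payoff; fun_prop)
  have hle (x : stdSimplex ℝ (Fin m)) : ⨅ y : stdSimplex ℝ (Fin n), payoff A x.1 y.1 ≤ v :=
    (ciInf_le (hbdd x) ⟨y0, hy0⟩).trans <| by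
      rw [payoff_eq_mulVec_dotProduct]; exact dotProduct_le_of_mem_stdSimplex x.2 hy
  refine le_antisymm (ciSup_le hle) (le_ciSup_of_le ⟨v, Set.forall_mem_range.2 hle⟩ ⟨x0, hx0⟩ ?_)
  exact le_ciInf fun y => by
    rw [payoff_eq_vecMul_dotProduct]; exact le_dotProduct_of_mem_stdSimplex y.2 hx

lemma isOptimalPair_of_forall_le (hx0 : x0 ∈ stdSimplex ℝ (Fin m))
    (hy0 : y0 ∈ stdSimplex ℝ (Fin n)) (hx : ∀ j, v ≤ (x0 ᵥ* A) j) (hy : ∀ i, (A *ᵥ y0) i ≤ v) :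
    IsOptimalPair A x0 y0 := by
  have hle (x : Fin m → ℝ) (hx : x ∈ stdSimplex ℝ (Fin m)) : payoff A x y0 ≤ v := by
    rw [payoff_eq_mulVec_dotProduct]; exact dotProduct_le_of_mem_stdSimplex hx hy
  have hge (y : Fin n → ℝ) (hy : y ∈ stdSimplex ℝ (Fin n)) : v ≤ payoff A x0 y := by
    rw [payoff_eq_vecMul_dotProduct]; exact le_dotProduct_of_mem_stdSimplex hy hx
  exact ⟨hx0, hy0, fun x hx => (hle x hx).trans (hge y0 hy0),
    fun y hy => (hle x0 hx0).trans (hge y hy)⟩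

lemma isOptimalPair_neg_transpose : IsOptimalPair (-Aᵀ) y x ↔ IsOptimalPair A x y := by
  simp only [IsOptimalPair, payoff_neg_transpose, neg_le_neg_iff]
  tauto

namespace IsOptimalPair

lemma payoff_le_vecMul (h : IsOptimalPair A x0 y0) (j : Fin n) : payoff A x0 y0 ≤ (x0 ᵥ* A) j := by
  classical
  simpa [payoff_eq_vecMul_dotProduct, dotProduct_single_one] using
    h.2.2.2 _ (single_mem_stdSimplex ℝ j)

lemma mulVec_le_payoff (h : IsOptimalPair A x0 y0) (i : Fin m) :
    (A *ᵥ y0) i ≤ payoff A x0 y0 := by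
  classical
  simpa [payoff_eq_mulVec_dotProduct, dotProduct_single_one] using
    h.2.2.1 _ (single_mem_stdSimplex ℝ i)

lemma matrixVal_eq (h : IsOptimalPair A x0 y0) : matrixVal A = payoff A x0 y0 :=
  matrixVal_eq_of_forall_le h.1 h.2.1 h.payoff_le_vecMul h.mulVec_le_payoff

lemma matrixVal_le_vecMul (h : IsOptimalPair A x0 y0) (j : Fin n) : matrixVal A ≤ (x0 ᵥ* A) j :=
  h.matrixVal_eq ▸ h.payoff_le_vecMul j

lemma mulVec_le_matrixVal (h : IsOptimalPair A x0 y0) (i : Fin m) : (A *ᵥ y0) i ≤ matrixVal A :=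
  h.matrixVal_eq ▸ h.mulVec_le_payoff i

lemma vecMul_eq_matrixVal (h : IsOptimalPair A x0 y0) {j : Fin n} (hj : y0 j ≠ 0) :
    (x0 ᵥ* A) j = matrixVal A :=
  eq_of_forall_le_of_dotProduct_le h.2.1 h.matrixVal_le_vecMul
    (by rw [h.matrixVal_eq, payoff_eq_vecMul_dotProduct]) hj

lemma mulVec_eq_matrixVal (h : IsOptimalPair A x0 y0) {i : Fin m} (hi : x0 i ≠ 0) :
    (A *ᵥ y0) i = matrixVal A :=
  eq_of_forall_ge_of_le_dotProduct h.1 h.mulVec_le_matrixVal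
    (by rw [h.matrixVal_eq, payoff_eq_mulVec_dotProduct]) hi

end IsOptimalPair

end Game

section Minimax

variable {m n : ℕ}

theorem exists_isOptimalPair (hm : 0 < m) (hn : 0 < n) (A : Matrix (Fin m) (Fin n) ℝ) :
    ∃ x y, IsOptimalPair A x y := by
  have hΔ {k : ℕ} (hk : 0 < k) : (stdSimplex ℝ (Fin k)).Nonempty :=
    ⟨_, single_mem_stdSimplex ℝ ⟨0, hk⟩⟩
  have hconvex {k : ℕ} : Convex ℝ (stdSimplex ℝ (Fin k)) := convex_stdSimplex ℝ _
  have hcont_left (x : Fin m → ℝ) : Continuous fun y => payoff A x y := by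
    unfold payoff; fun_prop
  have hcont_right (y : Fin n → ℝ) : Continuous fun x => payoff A x y := by
    unfold payoff; fun_prop
  -- Sion's theorem with the minimizer's simplex as the first factor: `f y x = payoff A x y`.
  obtain ⟨y, hy, x, hx, hsaddle⟩ := Sion.exists_isSaddlePointOn (f := fun y x => payoff A x y)
    (hΔ hn) hconvex (isCompact_stdSimplex ℝ _)
    (fun x _ => (hcont_left x).lowerSemicontinuous.lowerSemicontinuousOn _)
    (fun x _ => by
      simp only [payoff_eq_toLinearMap₂']
      exact ((toLinearMap₂' ℝ A x).convexOn hconvex).quasiconvexOn)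
    hconvex (hΔ hm) (isCompact_stdSimplex ℝ _)
    (fun y _ => (hcont_right y).upperSemicontinuous.upperSemicontinuousOn _)
    (fun y _ => by
      simp only [payoff_eq_toLinearMap₂']
      exact (((toLinearMap₂' ℝ A).flip y).concaveOn hconvex).quasiconcaveOn)
  exact ⟨x, y, hx, hy, fun x' hx' => hsaddle y hy x' hx', fun y' hy' => hsaddle y' hy' x hx⟩

lemma pos_of_matrixVal_ne_zero {A : Matrix (Fin m) (Fin n) ℝ} (h : matrixVal A ≠ 0) :
    0 < m ∧ 0 < n := by
  -- An empty simplex turns the `⨆` or `⨅` in `matrixVal` into the junk value `0`.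
  have hempty : IsEmpty (stdSimplex ℝ (Fin 0)) := ⟨fun x => by simpa using x.2.2⟩
  refine ⟨Nat.pos_of_ne_zero ?_, Nat.pos_of_ne_zero ?_⟩ <;> rintro rfl <;> apply h
  · exact Real.iSup_of_isEmpty _
  · simp [matrixVal, Real.iInf_of_isEmpty]

lemma matrixVal_neg_transpose (A : Matrix (Fin m) (Fin n) ℝ) :
    matrixVal (-Aᵀ) = -matrixVal A := by
  by_cases h : 0 < m ∧ 0 < n
  · obtain ⟨x, y, hxy⟩ := exists_isOptimalPair h.1 h.2 A
    rw [(isOptimalPair_neg_transpose.2 hxy).matrixVal_eq, hxy.matrixVal_eq, payoff_neg_transpose]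
  · have hA : matrixVal A = 0 := by_contra fun hA => h (pos_of_matrixVal_ne_zero hA)
    have hA' : matrixVal (-Aᵀ) = 0 := by_contra fun hA' => h (pos_of_matrixVal_ne_zero hA').symm
    rw [hA, hA', neg_zero]

end Minimax

def IsCompletelyMixed {m n : ℕ} (A : Matrix (Fin m) (Fin n) ℝ) : Prop :=
  ∀ x y, IsOptimalPair A x y → (∀ i, 0 < x i) ∧ ∀ j, 0 < y j

namespace IsCompletelyMixed

section Rectangular

variable {m n : ℕ} {A : Matrix (Fin m) (Fin n) ℝ}

lemma neg_transpose (hA : IsCompletelyMixed A) : IsCompletelyMixed (-Aᵀ) :=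
  fun y x h => (hA x y (isOptimalPair_neg_transpose.1 h)).symm

lemma eq_zero_of_mulVec_eq_zero (hA : IsCompletelyMixed A) (hv : matrixVal A ≠ 0)
    {z : Fin n → ℝ} (hz : A *ᵥ z = 0) : z = 0 := by
  obtain ⟨hm, hn⟩ := pos_of_matrixVal_ne_zero hv
  obtain ⟨x, y, hxy⟩ := exists_isOptimalPair hm hn A
  obtain ⟨hx, hy⟩ := hA x y hxy
  have hsum : ∑ j, z j = 0 := by
    have hcol : x ᵥ* A = fun _ => matrixVal A :=
      funext fun j => hxy.vecMul_eq_matrixVal (hy j).ne'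
    have : matrixVal A * ∑ j, z j = 0 :=
      calc matrixVal A * ∑ j, z j = x ᵥ* A ⬝ᵥ z := by rw [hcol, Finset.mul_sum]; rfl
        _ = 0 := by rw [← dotProduct_mulVec, hz, dotProduct_zero]
    exact (mul_eq_zero.1 this).resolve_left hv
  by_contra hz0
  have hneg : ∃ j, z j < 0 := by
    by_contra! hnonneg
    exact hz0 <| funext fun j =>
      (Finset.sum_eq_zero_iff_of_nonneg fun j _ => hnonneg j).1 hsum j (Finset.mem_univ j)
  -- Moving `y` along `z` keeps it optimal, until some coordinate reaches zero.
  obtain ⟨t, ht, j, hj⟩ := exists_add_smul_nonneg_and_eq_zero (fun j => (hy j).le) hneg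
  have hopt : IsOptimalPair A x (y + t • z) :=
    isOptimalPair_of_forall_le hxy.1
      ⟨ht, by simp [Finset.sum_add_distrib, ← Finset.mul_sum, hsum, hxy.2.1.2]⟩
      hxy.matrixVal_le_vecMul (by simpa [mulVec_add, mulVec_smul, hz] using hxy.mulVec_le_matrixVal)
  exact ((hA x _ hopt).2 j).ne' hj

lemma mulVecLin_injective (hA : IsCompletelyMixed A) (hv : matrixVal A ≠ 0) :
    Injective A.mulVecLin :=
  (injective_iff_map_eq_zero _).2 fun _ => hA.eq_zero_of_mulVec_eq_zero hv

lemma card_le (hA : IsCompletelyMixed A) (hv : matrixVal A ≠ 0) : n ≤ m := by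
  simpa using LinearMap.finrank_le_finrank_of_injective (hA.mulVecLin_injective hv)

lemma card_eq (hA : IsCompletelyMixed A) (hv : matrixVal A ≠ 0) : m = n :=
  le_antisymm
    (hA.neg_transpose.card_le (by rwa [matrixVal_neg_transpose, neg_ne_zero])) (hA.card_le hv)

end Rectangular

section Square

variable {k : ℕ} {A : Matrix (Fin k) (Fin k) ℝ}

lemma isUnit_det (hA : IsCompletelyMixed A) (hv : matrixVal A ≠ 0) : IsUnit A.det := by
  refine isUnit_iff_ne_zero.2 fun hdet => ?_
  obtain ⟨z, hz0, hz⟩ := exists_mulVec_eq_zero_iff.2 hdet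
  exact hz0 (hA.eq_zero_of_mulVec_eq_zero hv hz)

lemma matrixVal_eq_inv_sum_inv (hA : IsCompletelyMixed A) (hv : matrixVal A ≠ 0) :
    matrixVal A = (∑ i, ∑ j, A⁻¹ i j)⁻¹ := by
  obtain ⟨hk, -⟩ := pos_of_matrixVal_ne_zero hv
  obtain ⟨x, y, hxy⟩ := exists_isOptimalPair hk hk A
  have hrow : A *ᵥ y = fun _ => matrixVal A :=
    funext fun i => hxy.mulVec_eq_matrixVal ((hA x y hxy).1 i).ne'
  have hy : y = A⁻¹ *ᵥ fun _ => matrixVal A := by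
    rw [← hrow, mulVec_mulVec, nonsing_inv_mul _ (hA.isUnit_det hv), one_mulVec]
  refine eq_inv_of_mul_eq_one_left ?_
  calc matrixVal A * ∑ i, ∑ j, A⁻¹ i j = ∑ i, y i := by
        simp [hy, mulVec, dotProduct, Finset.mul_sum, mul_comm]
    _ = 1 := hxy.2.1.2

end Square

end IsCompletelyMixed

section Submatrix

variable {m n p q : ℕ}

lemma IsOptimalPair.matrixVal_submatrix {A : Matrix (Fin m) (Fin n) ℝ} {x : Fin m → ℝ}
    {y : Fin n → ℝ} (h : IsOptimalPair A x y) {ρ : Fin p → Fin m} {σ : Fin q → Fin n}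
    (hρ : Injective ρ) (hσ : Injective σ) (hx : ∀ i ∉ Set.range ρ, x i = 0)
    (hy : ∀ j ∉ Set.range σ, y j = 0) :
    matrixVal (A.submatrix ρ σ) = matrixVal A := by
  refine matrixVal_eq_of_forall_le (x0 := x ∘ ρ) (y0 := y ∘ σ)
    ⟨fun t => h.1.1 _, (Fintype.sum_of_injective ρ hρ _ x hx fun _ => rfl).trans h.1.2⟩
    ⟨fun s => h.2.1.1 _, (Fintype.sum_of_injective σ hσ _ y hy fun _ => rfl).trans h.2.1.2⟩
    (fun s => (h.matrixVal_le_vecMul (σ s)).trans_eq ?_)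
    (fun t => (le_of_eq ?_).trans (h.mulVec_le_matrixVal (ρ t)))
  · exact (Fintype.sum_of_injective ρ hρ _ _ (fun i hi => by simp [hx i hi]) fun _ => rfl).symm
  · exact Fintype.sum_of_injective σ hσ _ _ (fun j hj => by simp [hy j hj]) fun _ => rfl

lemma Fin.eq_of_notMem_range_succAbove {k : ℕ} {i j : Fin (k + 1)}
    (hj : j ∉ Set.range i.succAbove) : j = i := by
  simpa [Fin.range_succAbove] using hj

lemma IsOptimalPair.matrixVal_submatrix_succAbove_id {A : Matrix (Fin (m + 1)) (Fin n) ℝ}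
    {x : Fin (m + 1) → ℝ} {y : Fin n → ℝ} (h : IsOptimalPair A x y) {i : Fin (m + 1)}
    (hi : x i = 0) : matrixVal (A.submatrix i.succAbove id) = matrixVal A :=
  h.matrixVal_submatrix Fin.succAbove_right_injective injective_id
    (fun _ hj => Fin.eq_of_notMem_range_succAbove hj ▸ hi) (fun j hj => absurd ⟨j, rfl⟩ hj)

lemma IsOptimalPair.matrixVal_submatrix_id_succAbove {A : Matrix (Fin m) (Fin (n + 1)) ℝ}
    {x : Fin m → ℝ} {y : Fin (n + 1) → ℝ} (h : IsOptimalPair A x y) {j : Fin (n + 1)}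
    (hj : y j = 0) : matrixVal (A.submatrix id j.succAbove) = matrixVal A :=
  h.matrixVal_submatrix injective_id Fin.succAbove_right_injective
    (fun i hi => absurd ⟨i, rfl⟩ hi) (fun _ hk => Fin.eq_of_notMem_range_succAbove hk ▸ hj)

theorem exists_isCompletelyMixed_submatrix (A : Matrix (Fin m) (Fin n) ℝ) :
    ∃ (p q : ℕ) (ρ : Fin p → Fin m) (σ : Fin q → Fin n), Injective ρ ∧ Injective σ ∧
      matrixVal (A.submatrix ρ σ) = matrixVal A ∧ IsCompletelyMixed (A.submatrix ρ σ) := by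
  classical
  have hex : ∃ N, ∃ (p q : ℕ) (ρ : Fin p → Fin m) (σ : Fin q → Fin n), p + q = N ∧
      Injective ρ ∧ Injective σ ∧ matrixVal (A.submatrix ρ σ) = matrixVal A :=
    ⟨m + n, m, n, id, id, rfl, injective_id, injective_id, by rw [submatrix_id_id]⟩
  obtain ⟨p, q, ρ, σ, hpq, hρ, hσ, hval⟩ := Nat.find_spec hex
  have hmin {p' q' : ℕ} (ρ' : Fin p' → Fin m) (σ' : Fin q' → Fin n) (hρ' : Injective ρ')
      (hσ' : Injective σ') (hval' : matrixVal (A.submatrix ρ' σ') = matrixVal A) :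
      p + q ≤ p' + q' :=
    hpq ▸ Nat.find_min' hex ⟨p', q', ρ', σ', rfl, hρ', hσ', hval'⟩
  refine ⟨p, q, ρ, σ, hρ, hσ, hval, fun x y hxy => ⟨fun i => ?_, fun j => ?_⟩⟩
  · by_contra! hxi
    obtain ⟨p, rfl⟩ := Nat.exists_eq_add_one_of_ne_zero i.pos.ne'
    have := hmin (ρ ∘ i.succAbove) (σ ∘ id) (hρ.comp Fin.succAbove_right_injective)
      (hσ.comp injective_id) (by
        rw [← submatrix_submatrix,
          hxy.matrixVal_submatrix_succAbove_id (le_antisymm hxi (hxy.1.1 i)), hval])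
    omega
  · by_contra! hyj
    obtain ⟨q, rfl⟩ := Nat.exists_eq_add_one_of_ne_zero j.pos.ne'
    have := hmin (ρ ∘ id) (σ ∘ j.succAbove) (hρ.comp injective_id)
      (hσ.comp Fin.succAbove_right_injective) (by
        rw [← submatrix_submatrix,
          hxy.matrixVal_submatrix_id_succAbove (le_antisymm hyj (hxy.2.1.1 j)), hval])
    omega

end Submatrix

theorem exists_cmv_shapley_snow_kernel_general {m n : ℕ}
    (A : Matrix (Fin m) (Fin n) ℝ) (hval : matrixVal A ≠ 0) :
    ∃ (k : ℕ) (_ : 0 < k) (ρ : Fin k → Fin m) (σ : Fin k → Fin n),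
      Function.Injective ρ ∧ Function.Injective σ ∧
      IsUnit (A.submatrix ρ σ).det ∧
      matrixVal (A.submatrix ρ σ) = matrixVal A ∧
      matrixVal A = (∑ i, ∑ j, (A.submatrix ρ σ)⁻¹ i j)⁻¹ ∧
      (∀ x0 y0, IsOptimalPair (A.submatrix ρ σ) x0 y0 →
        (∀ i, 0 < x0 i) ∧ (∀ j, 0 < y0 j)) := by
  obtain ⟨p, q, ρ, σ, hρ, hσ, hvalB, hmixed⟩ := exists_isCompletelyMixed_submatrix A
  have hvB : matrixVal (A.submatrix ρ σ) ≠ 0 := hvalB ▸ hval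
  obtain rfl : p = q := hmixed.card_eq hvB
  exact ⟨p, (pos_of_matrixVal_ne_zero hvB).1, ρ, σ, hρ, hσ, hmixed.isUnit_det hvB, hvalB,
    hvalB ▸ hmixed.matrixVal_eq_inv_sum_inv hvB, hmixed⟩

/-- A matrix game with nonzero value has a completely mixed Shapley–Snow kernel
(a cmv-kernel): a square invertible submatrix `Ā` with
`val(Ā) = val(A) = (𝟏ᵀ Ā⁻¹ 𝟏)⁻¹` all of whose optimal strategy pairs are strictly
positive in every component. -/
theorem exists_cmv_shapley_snow_kernel {m n : ℕ} (hm : 0 < m) (hn : 0 < n)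
    (A : Matrix (Fin m) (Fin n) ℝ) (hval : matrixVal A ≠ 0) :
    ∃ (k : ℕ) (_ : 0 < k) (ρ : Fin k → Fin m) (σ : Fin k → Fin n),
      Function.Injective ρ ∧ Function.Injective σ ∧
      IsUnit (A.submatrix ρ σ).det ∧
      matrixVal (A.submatrix ρ σ) = matrixVal A ∧
      matrixVal A = (∑ i, ∑ j, (A.submatrix ρ σ)⁻¹ i j)⁻¹ ∧
      (∀ x0 y0, IsOptimalPair (A.submatrix ρ σ) x0 y0 →
        (∀ i, 0 < x0 i) ∧ (∀ j, 0 < y0 j)) :=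
  exists_cmv_shapley_snow_kernel_general A hval
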